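/- arXiv:gr-qc/0506086 — 4 statements merged into one kernel-verified Lean document; each statement's English description precedes it below -/
import Mathlib

section
/- Let f : ℝ × ℝ → ℝ be analytic at (0,0) such that, on some neighbourhood of (0,0), f(z, -ρ) = f(z, ρ) (f is even in its second variable) and f(z, 0) = 0. Then there exists a function g : ℝ × ℝ → ℝ which is analytic at (0,0) such that f(z, ρ) = ρ² · g(z, ρ) on a neighbourhood of (0,0). -/
/-!
For each homogeneous term of the power series `∑ pₙ` of `f` at the origin, write `x = (z, ρ)` and
`x' = (z, 0)`. Telescoping gives `pₙ(x, …, x) - pₙ(x', …, x') = ∑_κ pₙ(x, …, x, x - x', x', …, x')`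
with `x - x'` in slot `κ`, and `x - x' = ρ • (0, 1)`. As `f(x') = 0`, this divides the whole series
by `ρ`, and the quotient series still converges since its `n`-th coefficient has norm at most
`(n + 1) ‖pₙ₊₁‖`. So `f = ρ • h` with `h` analytic. Evenness of `f` forces `h` to be odd in `ρ`
off the axis, hence zero on the axis by continuity, and dividing `h` once more gives `f = ρ² g`.
-/

open Filter Topology

theorem MultilinearMap.map_const_sub_map_const {R M N : Type*} [CommRing R] [AddCommGroup M]
    [Module R M] [AddCommGroup N] [Module R N] {n : ℕ}
    (f : MultilinearMap R (fun _ : Fin (n + 1) => M) N) (x y : M) :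
    f (fun _ => x) - f (fun _ => y) =
      ∑ κ : Fin (n + 1), f (κ.insertNth (x - y) fun i => if i.castSucc < κ then x else y) := by
  have := f.map_sub_map_piecewise (fun _ => x) (fun _ => y) Finset.univ
  rw [Finset.piecewise_univ] at this
  rw [this]
  refine Finset.sum_congr rfl fun κ _ => congr_arg f (funext fun j => ?_)
  cases j using Fin.succAboveCases κ with
  | x => simp
  | p i =>
    rw [Fin.insertNth_apply_succAbove]
    simp only [Finset.mem_univ, forall_const, Fin.succAbove_lt_iff_castSucc_lt,
      (Fin.succAbove_ne κ i).symm, if_false]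

namespace FormalMultilinearSeries

variable {𝕜 E F : Type*} [NontriviallyNormedField 𝕜] [NormedAddCommGroup E] [NormedSpace 𝕜 E]
  [NormedAddCommGroup F] [NormedSpace 𝕜 F]

theorem radius_le_radius_of_norm_le_succ_mul {E' F' : Type*} [NormedAddCommGroup E']
    [NormedSpace 𝕜 E'] [NormedAddCommGroup F'] [NormedSpace 𝕜 F']
    {p : FormalMultilinearSeries 𝕜 E F} {q : FormalMultilinearSeries 𝕜 E' F'}
    (h : ∀ n, ‖q n‖ ≤ (n + 1) * ‖p (n + 1)‖) : p.radius ≤ q.radius := by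
  refine ENNReal.le_of_forall_nnreal_lt fun r hr => ?_
  rcases eq_or_ne r 0 with rfl | hr₀
  · simp
  obtain ⟨a, ⟨ha₀, ha₁⟩, C, -, hC⟩ := p.norm_mul_pow_le_mul_pow_of_lt_radius hr
  have hr₀' : (0 : ℝ) < r := by positivity
  have hbound : ∀ n : ℕ, ‖q n‖ * r ^ n ≤ C / r * ((n + 1 : ℕ) * a ^ (n + 1)) := fun n =>
    calc ‖q n‖ * r ^ n ≤ (n + 1) * ‖p (n + 1)‖ * r ^ n := by gcongr; exact h n
      _ = (n + 1) * (‖p (n + 1)‖ * r ^ (n + 1)) / r := by field_simp; ring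
      _ ≤ (n + 1) * (C * a ^ (n + 1)) / r := by have := hC (n + 1); gcongr
      _ = C / r * ((n + 1 : ℕ) * a ^ (n + 1)) := by push_cast; ring
  have hlim : Tendsto (fun n : ℕ => ((n + 1 : ℕ) : ℝ) * a ^ (n + 1)) atTop (𝓝 0) :=
    (tendsto_self_mul_const_pow_of_lt_one ha₀.le ha₁).comp (tendsto_add_atTop_nat 1)
  refine q.le_radius_of_isBigO
    (Asymptotics.IsBigO.trans ?_ ((hlim.const_mul (C / r)).isBigO_one ℝ))
  refine Asymptotics.IsBigO.of_bound 1 (Eventually.of_forall fun n => ?_)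
  rw [one_mul, Real.norm_of_nonneg (by positivity)]
  exact (hbound n).trans (le_abs_self _)

/-- `(v₀, …, vₙ₋₁) ↦ p (v₀, …, v_{κ-1}, (0, 1), (v_κ.1, 0), …, (vₙ₋₁.1, 0))`. -/
noncomputable def divSndTerm {n : ℕ}
    (p : ContinuousMultilinearMap 𝕜 (fun _ : Fin (n + 1) => E × 𝕜) F) (κ : Fin (n + 1)) :
    ContinuousMultilinearMap 𝕜 (fun _ : Fin n => E × 𝕜) F :=
  (p.curryMid κ (0, 1)).compContinuousLinearMap fun i =>
    if i.castSucc < κ then .id 𝕜 _ else (ContinuousLinearMap.inl 𝕜 E 𝕜).comp (.fst 𝕜 E 𝕜)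

theorem norm_divSndTerm_le {n : ℕ}
    (p : ContinuousMultilinearMap 𝕜 (fun _ : Fin (n + 1) => E × 𝕜) F) (κ : Fin (n + 1)) :
    ‖divSndTerm p κ‖ ≤ ‖p‖ := by
  refine (ContinuousMultilinearMap.norm_compContinuousLinearMap_le _ _).trans ?_
  refine (mul_le_of_le_one_right (norm_nonneg _) (Finset.prod_le_one (fun _ _ => norm_nonneg _)
    fun i _ => ?_)).trans ?_
  · split_ifs
    · exact ContinuousLinearMap.norm_id_le
    · exact (ContinuousLinearMap.opNorm_comp_le _ _).trans
        (mul_le_one₀ (ContinuousLinearMap.norm_inl_le_one 𝕜 E 𝕜) (norm_nonneg _)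
          (ContinuousLinearMap.norm_fst_le 𝕜 E 𝕜))
  · have h_e₂ : ‖((0 : E), (1 : 𝕜))‖ = 1 := by simp [Prod.norm_def]
    simpa [h_e₂] using (p.curryMid κ).le_opNorm (0, 1)

theorem snd_smul_sum_divSndTerm_apply {n : ℕ}
    (p : ContinuousMultilinearMap 𝕜 (fun _ : Fin (n + 1) => E × 𝕜) F) (x : E × 𝕜) :
    x.2 • ∑ κ, divSndTerm p κ (fun _ => x) = p (fun _ => x) - p (fun _ => (x.1, 0)) := by
  have h_sub : x - (x.1, 0) = x.2 • ((0 : E), (1 : 𝕜)) := by ext <;> simp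
  have h_tele := p.toMultilinearMap.map_const_sub_map_const x (x.1, 0)
  simp only [ContinuousMultilinearMap.coe_coe] at h_tele
  rw [h_tele, h_sub, Finset.smul_sum]
  refine Finset.sum_congr rfl fun κ _ => ?_
  rw [← ContinuousMultilinearMap.curryMid_apply, map_smul, divSndTerm,
    ContinuousMultilinearMap.compContinuousLinearMap_apply]
  show _ = x.2 • (_ : F)
  congr 1
  exact congrArg _ (funext fun i => by split_ifs <;> rfl)

/-- Coefficients of `f x / x.2` when `f = ∑ pₙ` vanishes on the axis `x.2 = 0`. -/
noncomputable def divSnd (p : FormalMultilinearSeries 𝕜 (E × 𝕜) F) :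
    FormalMultilinearSeries 𝕜 (E × 𝕜) F :=
  fun n => ∑ κ, divSndTerm (p (n + 1)) κ

variable (p : FormalMultilinearSeries 𝕜 (E × 𝕜) F)

theorem norm_divSnd_le (n : ℕ) : ‖p.divSnd n‖ ≤ (n + 1) * ‖p (n + 1)‖ :=
  calc ‖p.divSnd n‖ ≤ ∑ _κ : Fin (n + 1), ‖p (n + 1)‖ :=
        (norm_sum_le _ _).trans (Finset.sum_le_sum fun κ _ => norm_divSndTerm_le _ κ)
    _ = (n + 1) * ‖p (n + 1)‖ := by simp

theorem radius_le_radius_divSnd : p.radius ≤ p.divSnd.radius :=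
  radius_le_radius_of_norm_le_succ_mul p.norm_divSnd_le

theorem snd_smul_divSnd_apply (n : ℕ) (x : E × 𝕜) :
    x.2 • p.divSnd n (fun _ => x) = p (n + 1) (fun _ => x) - p (n + 1) (fun _ => (x.1, 0)) := by
  rw [divSnd, sum_apply, snd_smul_sum_divSndTerm_apply]

end FormalMultilinearSeries

section DivisionBySnd

variable {𝕜 E F : Type*} [NontriviallyNormedField 𝕜] [NormedAddCommGroup E] [NormedSpace 𝕜 E]
  [NormedAddCommGroup F] [NormedSpace 𝕜 F]

theorem HasFPowerSeriesOnBall.hasSum_snd_smul_divSnd {f : E × 𝕜 → F}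
    {p : FormalMultilinearSeries 𝕜 (E × 𝕜) F} {r : ENNReal} (hf : HasFPowerSeriesOnBall f p 0 r)
    {x : E × 𝕜} (hx : x ∈ Metric.eball 0 r) :
    HasSum (fun n => x.2 • p.divSnd n (fun _ => x)) (f x - f (x.1, 0)) := by
  have hx_axis : (x.1, (0 : 𝕜)) ∈ Metric.eball (0 : E × 𝕜) r := by
    rw [mem_eball_zero_iff] at hx ⊢
    refine lt_of_le_of_lt ?_ hx
    simp only [← ofReal_norm]
    exact ENNReal.ofReal_le_ofReal (by simp [Prod.norm_def])
  have h_diff := (hf.hasSum hx).sub (hf.hasSum hx_axis)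
  have h_const : p 0 (fun _ => x) = p 0 (fun _ => (x.1, 0)) := congrArg _ (Subsingleton.elim _ _)
  simp only [zero_add] at h_diff
  rw [← hasSum_nat_add_iff' 1, Finset.sum_range_one, h_const, sub_self, sub_zero] at h_diff
  simpa [FormalMultilinearSeries.snd_smul_divSnd_apply] using h_diff

theorem AnalyticAt.exists_eq_snd_smul [CompleteSpace F] {f : E × 𝕜 → F} (hf : AnalyticAt 𝕜 f 0)
    (hf_axis : ∀ᶠ x : E × 𝕜 in 𝓝 0, f (x.1, 0) = 0) :
    ∃ h : E × 𝕜 → F, AnalyticAt 𝕜 h 0 ∧ ∀ᶠ x : E × 𝕜 in 𝓝 0, f x = x.2 • h x := by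
  obtain ⟨p, r, hp⟩ := hf
  have hq := p.divSnd.hasFPowerSeriesOnBall
    (hp.r_pos.trans_le (hp.r_le.trans p.radius_le_radius_divSnd))
  refine ⟨p.divSnd.sum, hq.analyticAt, ?_⟩
  filter_upwards [hf_axis, Metric.eball_mem_nhds 0 hp.r_pos,
    Metric.eball_mem_nhds 0 hq.r_pos] with x hx_axis hx hxq
  have := hp.hasSum_snd_smul_divSnd hx
  rw [hx_axis, sub_zero] at this
  have hq_sum := (hq.hasSum hxq).const_smul x.2
  rw [zero_add] at hq_sum
  exact this.unique hq_sum

end DivisionBySnd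

theorem eventually_eq_zero_of_eventually_snd_smul_eq_zero {X 𝕜 F : Type*} [TopologicalSpace X]
    [NontriviallyNormedField 𝕜] [NormedAddCommGroup F] [NormedSpace 𝕜 F] {k : X × 𝕜 → F}
    {x₀ : X × 𝕜} (hk : ∀ᶠ x in 𝓝 x₀, ContinuousAt k x) (h : ∀ᶠ x in 𝓝 x₀, x.2 • k x = 0) :
    ∀ᶠ x in 𝓝 x₀, k x = 0 := by
  obtain ⟨U, hU, hU_open, hx₀⟩ := eventually_nhds_iff.1 (hk.and h)
  have h_dense : Dense {x : X × 𝕜 | x.2 ≠ 0} :=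
    (dense_compl_singleton (0 : 𝕜)).preimage isOpenMap_snd
  have h_eq : Set.EqOn k 0 U := Set.EqOn.of_subset_closure (s := U ∩ {x | x.2 ≠ 0})
    (fun x hx => (smul_eq_zero.1 (hU x hx.1).2).resolve_left hx.2)
    (fun x hx => (hU x hx).1.continuousWithinAt) continuousOn_const Set.inter_subset_left
    (h_dense.open_subset_closure_inter hU_open)
  exact eventually_nhds_iff.2 ⟨U, h_eq, hU_open, hx₀⟩

/-- If `f : ℝ × ℝ → ℝ` is analytic at `(0,0)`, even in its second
variable near `(0,0)`, and vanishes on the axis `ρ = 0` near `(0,0)`, then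
`f(z,ρ) = ρ² · g(z,ρ)` near `(0,0)` for some `g` analytic at `(0,0)`. -/
theorem stmt_1 (f : ℝ × ℝ → ℝ) (hf : AnalyticAt ℝ f (0, 0))
    (heven : ∀ᶠ p : ℝ × ℝ in nhds (0, 0), f (p.1, -p.2) = f (p.1, p.2))
    (hzero : ∀ᶠ p : ℝ × ℝ in nhds (0, 0), f (p.1, 0) = 0) :
    ∃ g : ℝ × ℝ → ℝ, AnalyticAt ℝ g (0, 0) ∧
      ∀ᶠ p : ℝ × ℝ in nhds (0, 0), f p = p.2 ^ 2 * g p := by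
  obtain ⟨h, h_an, hf_eq⟩ := hf.exists_eq_snd_smul hzero
  have h_refl : Tendsto (fun p : ℝ × ℝ => (p.1, -p.2)) (𝓝 0) (𝓝 0) :=
    (continuous_fst.prodMk continuous_snd.neg).tendsto' 0 0 (by simp)
  have h_proj : Tendsto (fun p : ℝ × ℝ => (p.1, (0 : ℝ))) (𝓝 0) (𝓝 0) :=
    (continuous_fst.prodMk continuous_const).tendsto' 0 0 rfl
  have h_odd : ∀ᶠ p : ℝ × ℝ in 𝓝 0, p.2 • (h p + h (p.1, -p.2)) = 0 := by
    filter_upwards [hf_eq, h_refl.eventually hf_eq, heven] with p h₁ h₂ h₃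
    simp only [smul_eq_mul] at *
    linear_combination h₂ - h₁ - h₃
  have h_cont : ∀ᶠ p : ℝ × ℝ in 𝓝 0, ContinuousAt (fun p => h p + h (p.1, -p.2)) p := by
    have : AnalyticAt ℝ (fun p : ℝ × ℝ => h p + h (p.1, -p.2)) 0 :=
      h_an.add (h_an.comp_of_eq (analyticAt_fst.prod analyticAt_snd.neg) (by simp))
    exact this.eventually_analyticAt.mono fun _ hp => hp.continuousAt
  have h_axis : ∀ᶠ p : ℝ × ℝ in 𝓝 0, h (p.1, 0) = 0 := by
    filter_upwards [h_proj.eventually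
      (eventually_eq_zero_of_eventually_snd_smul_eq_zero h_cont h_odd)] with p hp
    simp only [neg_zero] at hp
    linarith
  obtain ⟨g, g_an, hh_eq⟩ := h_an.exists_eq_snd_smul h_axis
  refine ⟨g, g_an, ?_⟩
  filter_upwards [hf_eq, hh_eq] with p h₁ h₂
  rw [h₁, h₂, smul_eq_mul, smul_eq_mul]
  ring
end

section
/- Let β : ℝ → ℝ be real-analytic on an open interval containing 0 with β(0) = 0 and β'(0) = 0, and let C ∈ ℝ. Define F(r) = ∫₀^r (e^{2β(s)} - 1)/s² ds (the integrand extends continuously to s = 0 since β vanishes to second order) and κ(r) = -log(1 - r·F(r) - r·C) + β(r). Then for every r ≠ 0 in a neighbourhood of 0 on which 1 - r·F(r) - r·C > 0, the function M(r) := β''(r) - (β'(r))² + (2/r)·β'(r) - κ''(r) + (κ'(r))² vanishes: M(r) = 0. -/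
/-!
Put `G r = 1 - r F(r) - r C`, so that `κ = -log G + β`. Since `F'(r) = (e^{2β(r)} - 1) / r²`,
one gets `G - r G' = e^{2β}`; differentiating, `r G'' = -2 β' e^{2β}`. Substituting
`κ' = -G'/G + β'` and `κ'' = -G''/G + (G'/G)² + β''` into `M`, the two identities make it cancel.
The only analytic input is that `β` vanishes to second order at `0`, so that
`(e^{2β(s)} - 1) / s²` agrees away from `0` with an analytic function; hence `F` is
differentiable near `0` with the expected derivative.
-/

open Real Filter Topology MeasureTheory Function

theorem AnalyticAt.exists_eq_sub_sq_smul {𝕜 E : Type*} [NontriviallyNormedField 𝕜]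
    [NormedAddCommGroup E] [NormedSpace 𝕜 E] {f : 𝕜 → E} {a : 𝕜} (hf : AnalyticAt 𝕜 f a)
    (hfa : f a = 0) (hf'a : deriv f a = 0) :
    ∃ g : 𝕜 → E, AnalyticAt 𝕜 g a ∧ ∀ z, f z = (z - a) ^ 2 • g z := by
  obtain ⟨p, hp⟩ := hf
  refine ⟨(swap dslope a)^[2] f, (hp.has_fpower_series_iterate_dslope_fslope 2).analyticAt,
    fun z => (pow_sub_smul_iterate_dslope_of_zero 2 (fun k hk => ?_) z).symm⟩
  interval_cases k
  · exact hfa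
  · simpa [dslope_same] using hf'a

theorem hasDerivAt_integral_of_eventually_continuousAt {E : Type*} [NormedAddCommGroup E]
    [NormedSpace ℝ E] [CompleteSpace E] {g : ℝ → E} {a : ℝ}
    (hg : ∀ᶠ x in 𝓝 a, ContinuousAt g x) :
    ∀ᶠ x in 𝓝 a, HasDerivAt (fun u => ∫ s in a..u, g s) (g x) x := by
  obtain ⟨ε, hε, hgε⟩ := Metric.eventually_nhds_iff_ball.mp hg
  filter_upwards [Metric.ball_mem_nhds a hε] with x hx
  have hsub : Set.uIcc a x ⊆ Metric.ball a ε := by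
    rw [← segment_eq_uIcc]
    exact (convex_ball a ε).segment_subset (Metric.mem_ball_self hε) hx
  exact intervalIntegral.integral_hasDerivAt_right
    (ContinuousOn.intervalIntegrable fun y hy => (hgε y (hsub hy)).continuousWithinAt)
    (ContinuousAt.stronglyMeasurableAtFilter Metric.isOpen_ball hgε x hx) (hgε x hx)

theorem intervalIntegral.integral_div_sq_eq_of_eq_sq_mul {f g : ℝ → ℝ}
    (hfg : ∀ s, f s = s ^ 2 * g s) (x : ℝ) :
    ∫ s in (0:ℝ)..x, f s / s ^ 2 = ∫ s in (0:ℝ)..x, g s := by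
  refine intervalIntegral.integral_congr_ae ?_
  filter_upwards [Measure.ae_ne volume 0] with s hs _
  rw [hfg, mul_div_cancel_left₀ _ (pow_ne_zero 2 hs)]

theorem M_eq_zero_of_hasDerivAt_sub_exp_div {G β κ : ℝ → ℝ} {r : ℝ} (hr : r ≠ 0) (hGr : 0 < G r)
    (hβ : ∀ᶠ x in 𝓝 r, DifferentiableAt ℝ β x) (hβ' : DifferentiableAt ℝ (deriv β) r)
    (hG : ∀ᶠ x in 𝓝 r, HasDerivAt G ((G x - exp (2 * β x)) / x) x)
    (hκ : ∀ x, κ x = -log (G x) + β x) :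
    deriv (deriv β) r - deriv β r ^ 2 + 2 / r * deriv β r
      - deriv (deriv κ) r + deriv κ r ^ 2 = 0 := by
  have hGpos : ∀ᶠ x in 𝓝 r, 0 < G x :=
    hG.self_of_nhds.continuousAt.eventually (lt_mem_nhds hGr)
  have hκ' : deriv κ =ᶠ[𝓝 r] fun x => -((G x - exp (2 * β x)) / x / G x) + deriv β x := by
    filter_upwards [hG, hβ, hGpos] with x hGx hβx hGx0
    rw [funext hκ]
    exact ((hGx.log hGx0.ne').neg.add hβx.hasDerivAt).deriv
  have hE : HasDerivAt (fun x => exp (2 * β x)) (exp (2 * β r) * (2 * deriv β r)) r :=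
    (hβ.self_of_nhds.hasDerivAt.const_mul 2).exp
  have hκ'' := ((((hG.self_of_nhds.sub hE).div (hasDerivAt_id' r) hr).div hG.self_of_nhds
    hGr.ne').neg.add hβ'.hasDerivAt).congr_of_eventuallyEq hκ'
  rw [hκ''.deriv, hκ'.self_of_nhds, Pi.sub_apply, Pi.div_apply, Pi.sub_apply]
  field_simp
  ring

/-- For `β` real-analytic near `0` with `β(0) = β'(0) = 0`,
`F(r) = ∫₀^r (e^{2β(s)}-1)/s² ds` and `κ(r) = -log(1 - r·F(r) - r·C) + β(r)`, the
quantity `M(r) = β'' - (β')² + (2/r)·β' - κ'' + (κ')²` vanishes for every `r ≠ 0`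
near `0` at which `1 - r·F(r) - r·C > 0`. -/
theorem stmt_5 (a b : ℝ) (ha : a < 0) (hb : 0 < b)
    (β : ℝ → ℝ) (hβ : AnalyticOnNhd ℝ β (Set.Ioo a b))
    (hβ0 : β 0 = 0) (hβ'0 : deriv β 0 = 0) (C : ℝ)
    (F : ℝ → ℝ) (hF : ∀ r : ℝ, F r = ∫ s in (0:ℝ)..r, (Real.exp (2 * β s) - 1) / s ^ 2)
    (κ : ℝ → ℝ) (hκ : ∀ r : ℝ, κ r = -Real.log (1 - r * F r - r * C) + β r) :
    ∀ᶠ r in nhds (0:ℝ), r ≠ 0 → 0 < 1 - r * F r - r * C →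
      deriv (deriv β) r - (deriv β r) ^ 2 + (2 / r) * deriv β r
        - deriv (deriv κ) r + (deriv κ r) ^ 2 = 0 := by
  have hβ_at : AnalyticAt ℝ β 0 := hβ 0 ⟨ha, hb⟩
  have hf' : HasDerivAt (fun s => exp (2 * β s) - 1) (exp (2 * β 0) * (2 * deriv β 0)) 0 :=
    (hβ_at.differentiableAt.hasDerivAt.const_mul 2).exp.sub_const 1
  obtain ⟨g, hg, hfg⟩ := AnalyticAt.exists_eq_sub_sq_smul
    (f := fun s => exp (2 * β s) - 1) (by fun_prop) (by simp [hβ0]) (by simp [hf'.deriv, hβ'0])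
  simp only [sub_zero, smul_eq_mul] at hfg
  have hFd : ∀ᶠ x in 𝓝 0, HasDerivAt F (g x) x := by
    rw [funext fun x => (hF x).trans (intervalIntegral.integral_div_sq_eq_of_eq_sq_mul hfg x)]
    exact hasDerivAt_integral_of_eventually_continuousAt
      (hg.eventually_analyticAt.mono fun x hx => hx.continuousAt)
  have hG : ∀ᶠ x in 𝓝 0, x ≠ 0 → HasDerivAt (fun y => 1 - y * F y - y * C)
      ((1 - x * F x - x * C - exp (2 * β x)) / x) x := by
    filter_upwards [hFd] with x hx hx0
    refine ((((hasDerivAt_id' x).mul hx).const_sub 1).sub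
      ((hasDerivAt_id' x).mul_const C)).congr_deriv ?_
    rw [eq_div_iff hx0]
    linear_combination hfg x
  filter_upwards [hβ_at.eventually_analyticAt.eventually_nhds, hG.eventually_nhds]
    with r hβr hGr hr0 hpos
  exact M_eq_zero_of_hasDerivAt_sub_exp_div hr0 hpos (hβr.mono fun x hx => hx.differentiableAt)
    hβr.self_of_nhds.deriv.differentiableAt
    ((hGr.and (eventually_ne_nhds hr0)).mono fun x hx => hx.1 hx.2) hκ
end

section
/- Let a, m ∈ ℝ and n ∈ ℕ. The n-th iterated derivative at ρ = 0 of the function y : ℂ → ℂ, y(ρ) = m·(1 + 2·i·a·ρ)^{-1/2} (principal complex power), equals m_n = m·(-i·a)^n·(2n)!/(2^n·n!). Consequently the Hansen multipole moments of the Kerr solution, M_n = -(2^n·n!/(2n)!)·m_n, are given by M_n = -(-i)^n·m·a^n. -/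
open Complex Topology Finset

private lemma key (c : ℂ) : ∀ (n : ℕ) (w k : ℂ),
    iteratedDeriv n (fun ρ : ℂ => k * (1 + c * ρ) ^ w) 0
      = k * c ^ n * ∏ i ∈ range n, (w - i) := by
  intro n
  induction n with
  | zero => intro w k; simp
  | succ n ih =>
    intro w k
    rw [iteratedDeriv_succ']
    have hEq : (deriv fun ρ : ℂ => k * (1 + c * ρ) ^ w)
        =ᶠ[𝓝 (0 : ℂ)] fun ρ : ℂ => (k * c * w) * (1 + c * ρ) ^ (w - 1) := by
      have hopen : IsOpen {ρ : ℂ | 1 + c * ρ ∈ slitPlane} :=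
        isOpen_slitPlane.preimage (by fun_prop)
      have h0 : (0 : ℂ) ∈ {ρ : ℂ | 1 + c * ρ ∈ slitPlane} := by
        simp [Complex.one_mem_slitPlane]
      filter_upwards [hopen.mem_nhds h0] with ρ hρ
      have hd : HasDerivAt (fun ρ : ℂ => 1 + c * ρ) c ρ := by
        simpa using ((hasDerivAt_id ρ).const_mul c).const_add 1
      have := (((hd.cpow_const (c := w)) hρ).const_mul k).deriv
      rw [this]; ring
    have hp : (∏ i ∈ range n, (w - 1 - (i:ℂ))) = ∏ i ∈ range n, (w - ((i+1 : ℕ):ℂ)) := by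
      refine Finset.prod_congr rfl fun i _ => ?_; push_cast; ring
    rw [hEq.iteratedDeriv_eq, ih (w - 1) (k * c * w), Finset.prod_range_succ', hp]
    push_cast
    ring

private lemma prod_half (n : ℕ) :
    (∏ i ∈ Finset.range n, (-(1 / 2 : ℂ) - i))
      = (-1) ^ n * ((2 * n).factorial : ℂ) / (4 ^ n * (n.factorial : ℂ)) := by
  induction n with
  | zero => simp
  | succ n ih =>
    rw [Finset.prod_range_succ, ih]
    have h1 : ((2 * (n + 1)).factorial : ℂ)
        = (2 * n + 2) * (2 * n + 1) * ((2 * n).factorial : ℂ) := by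
      have : 2 * (n + 1) = (2 * n + 1) + 1 := by ring
      rw [this, Nat.factorial_succ, Nat.factorial_succ]; push_cast; ring
    have h2 : ((n + 1).factorial : ℂ) = (n + 1) * (n.factorial : ℂ) := by
      rw [Nat.factorial_succ]; push_cast; ring
    have hf : ((n.factorial : ℂ)) ≠ 0 := Nat.cast_ne_zero.2 n.factorial_ne_zero
    have h4 : (4 : ℂ) ^ n ≠ 0 := pow_ne_zero _ (by norm_num)
    have hn1 : ((n : ℂ) + 1) ≠ 0 := Nat.cast_add_one_ne_zero n
    rw [h1, h2]
    field_simp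
    ring

open Complex in
/-- The `n`-th iterated derivative at `ρ = 0` of
`y(ρ) = m·(1+2i·a·ρ)^{-1/2}` (principal complex power) equals
`m_n = m·(-i·a)^n·(2n)!/(2^n·n!)`, and consequently the Hansen moments
`M_n = -(2^n·n!/(2n)!)·m_n` of the Kerr solution equal `-(-i)^n·m·a^n`. -/
theorem stmt_14 (a m : ℝ) (n : ℕ) :
    iteratedDeriv n (fun ρ : ℂ => (m:ℂ) * (1 + 2 * I * (a:ℂ) * ρ) ^ (-(1 / 2) : ℂ)) 0
      = (m:ℂ) * (-I * (a:ℂ)) ^ n * ((2 * n).factorial : ℂ) / (2 ^ n * (n.factorial : ℂ))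
    ∧
    -((2 ^ n * (n.factorial : ℂ)) / ((2 * n).factorial : ℂ)) *
        ((m:ℂ) * (-I * (a:ℂ)) ^ n * ((2 * n).factorial : ℂ) / (2 ^ n * (n.factorial : ℂ)))
      = -(-I) ^ n * (m:ℂ) * (a:ℂ) ^ n := by
  have hf : ((n.factorial : ℂ)) ≠ 0 := Nat.cast_ne_zero.2 n.factorial_ne_zero
  have hf2 : (((2 * n).factorial : ℂ)) ≠ 0 := Nat.cast_ne_zero.2 (2 * n).factorial_ne_zero
  have h2 : (2 : ℂ) ^ n ≠ 0 := pow_ne_zero _ (by norm_num)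
  constructor
  · rw [key (2 * I * (a:ℂ)) n (-(1 / 2) : ℂ) (m:ℂ), prod_half]
    have hI : (2 * I * (a:ℂ)) ^ n * ((-1 : ℂ)) ^ n = 2 ^ n * (-I * (a:ℂ)) ^ n := by
      rw [← mul_pow, ← mul_pow]; congr 1; ring
    have h4 : (4 : ℂ) ^ n = 2 ^ n * 2 ^ n := by rw [← mul_pow]; norm_num
    rw [h4]
    field_simp
    linear_combination ((m:ℂ) * ((2*n).factorial : ℂ) * (2:ℂ) ^ n) * hI
  · have hI : (-(I * (a:ℂ))) ^ n = (-I) ^ n * (a:ℂ) ^ n := by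
      rw [show -(I * (a:ℂ)) = (-I) * (a:ℂ) by ring, mul_pow]
    field_simp
    rw [hI]; ring
end

section
/- Let λ > 0 and ω ∈ ℝ. Define the complex Hansen potential φ_H = ((1 - λ² - ω²) - 2·i·ω)/(4λ) and the Ernst potential φ_E = (1 - λ - i·ω)/(1 + λ + i·ω). Then φ_E · (1 + √(4·|φ_H|² + 1)) = 2·φ_H; equivalently, φ_E = 2φ_H/(1 + √(1 + 4|φ_H|²)). -/
/-!
With `z = λ + iω` the two potentials are `φ_H = (1 - z)(1 + z̄)/(4 Re z)` and
`φ_E = (1 - z)/(1 + z)`. Since `|1 ∓ z|² = 1 + |z|² ∓ 2 Re z`, we get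
`4|φ_H|² + 1 = ((1 + |z|²)/(2 Re z))²`, hence `1 + √(4|φ_H|² + 1) = |1 + z|²/(2 Re z)`,
and multiplying `φ_E` by `|1 + z|² = (1 + z)(1 + z̄)` cancels its denominator, leaving `2 φ_H`.
-/

open Complex ComplexConjugate

noncomputable def hansenPotential (z : ℂ) : ℂ := (1 - z) * (1 + conj z) / (4 * z.re)

noncomputable def ernstPotential (z : ℂ) : ℂ := (1 - z) / (1 + z)

lemma norm_one_sub_mul_one_add_conj_sq (z : ℂ) :
    ‖(1 - z) * (1 + conj z)‖ ^ 2 = (1 + ‖z‖ ^ 2) ^ 2 - 4 * z.re ^ 2 := by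
  rw [show 1 + conj z = conj (1 + z) by simp, norm_mul, norm_conj, mul_pow, ← normSq_eq_norm_sq,
    ← normSq_eq_norm_sq, ← normSq_eq_norm_sq]
  simp only [normSq_apply, sub_re, add_re, sub_im, add_im, one_re, one_im]
  ring

lemma sqrt_four_mul_norm_hansenPotential_sq_add_one {z : ℂ} (hz : 0 < z.re) :
    √(4 * ‖hansenPotential z‖ ^ 2 + 1) = (1 + ‖z‖ ^ 2) / (2 * z.re) := by
  have hsq : 4 * ‖hansenPotential z‖ ^ 2 + 1 = ((1 + ‖z‖ ^ 2) / (2 * z.re)) ^ 2 := by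
    rw [hansenPotential, norm_div, div_pow, norm_one_sub_mul_one_add_conj_sq, norm_mul,
      norm_ofNat, norm_real, Real.norm_of_nonneg hz.le]
    field_simp
    ring
  rw [hsq, Real.sqrt_sq (by positivity)]

lemma one_add_sqrt_four_mul_norm_hansenPotential_sq_add_one {z : ℂ} (hz : 0 < z.re) :
    1 + √(4 * ‖hansenPotential z‖ ^ 2 + 1) = normSq (1 + z) / (2 * z.re) := by
  rw [sqrt_four_mul_norm_hansenPotential_sq_add_one hz, ← normSq_eq_norm_sq, normSq_apply,
    normSq_apply, add_re, add_im, one_re, one_im]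
  field_simp
  ring

theorem ernstPotential_mul_one_add_sqrt {z : ℂ} (hz : 0 < z.re) :
    ernstPotential z * (1 + √(4 * ‖hansenPotential z‖ ^ 2 + 1) : ℂ) = 2 * hansenPotential z := by
  have h1z : 1 + z ≠ 0 := fun h => by
    have h := congrArg re h
    rw [add_re, one_re, zero_re] at h
    linarith
  rw [← ofReal_one, ← ofReal_add, one_add_sqrt_four_mul_norm_hansenPotential_sq_add_one hz,
    ofReal_div, ← mul_conj, ernstPotential, hansenPotential, map_add, map_one]
  have hre : (z.re : ℂ) ≠ 0 := ofReal_ne_zero.mpr hz.ne'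
  push_cast
  field_simp
  ring

/-- For `λ > 0`, `ω ∈ ℝ`, the complex Hansen potential
`φ_H = ((1-λ²-ω²) - 2iω)/(4λ)` and the Ernst potential `φ_E = (1-λ-iω)/(1+λ+iω)`
satisfy `φ_E·(1 + √(4|φ_H|²+1)) = 2φ_H`; equivalently `φ_E = 2φ_H/(1+√(1+4|φ_H|²))`. -/
theorem stmt_18 (l ω : ℝ) (hl : 0 < l)
    (φH φE : ℂ)
    (hH : φH = (((1 - l ^ 2 - ω ^ 2 : ℝ) : ℂ) - 2 * I * (ω:ℂ)) / (4 * (l:ℂ)))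
    (hE : φE = (1 - (l:ℂ) - I * (ω:ℂ)) / (1 + (l:ℂ) + I * (ω:ℂ))) :
    φE * (1 + ((Real.sqrt (4 * ‖φH‖ ^ 2 + 1) : ℝ) : ℂ)) = 2 * φH ∧
    φE = 2 * φH / (1 + ((Real.sqrt (1 + 4 * ‖φH‖ ^ 2) : ℝ) : ℂ)) := by
  set z : ℂ := l + ω * I
  have hz : z.re = l := by simp [z]
  have hH' : φH = hansenPotential z := by
    rw [hH, hansenPotential, hz, map_add, map_mul, conj_ofReal, conj_ofReal, conj_I]
    push_cast
    congr 1
    linear_combination (-(ω : ℂ) ^ 2) * I_sq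
  have hE' : φE = ernstPotential z := by
    rw [hE, ernstPotential]
    ring
  have key : φE * (1 + √(4 * ‖φH‖ ^ 2 + 1) : ℂ) = 2 * φH := by
    rw [hH', hE']
    exact ernstPotential_mul_one_add_sqrt (hz ▸ hl)
  have hne : (1 + √(4 * ‖φH‖ ^ 2 + 1) : ℂ) ≠ 0 := mod_cast (by positivity : (0 : ℝ) < _).ne'
  rw [add_comm 1 (4 * ‖φH‖ ^ 2)]
  exact ⟨key, eq_div_of_mul_eq hne key⟩
end
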